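/- A graph G (of any cardinality) has no induced path on four vertices if and only if there exists an N-free partial order on the vertex set of G whose comparability graph is G. -/

import Mathlib

/-- `(a,b,c,d)` is an induced path on four vertices in `G`: the vertices are distinct
and the only edges among them are `ab`, `bc`, `cd`. -/
def IsInducedP4 {X : Type*} (G : SimpleGraph X) (a b c d : X) : Prop :=
  a ≠ b ∧ a ≠ c ∧ a ≠ d ∧ b ≠ c ∧ b ≠ d ∧ c ≠ d ∧
  G.Adj a b ∧ G.Adj b c ∧ G.Adj c d ∧ ¬ G.Adj a c ∧ ¬ G.Adj a d ∧ ¬ G.Adj b d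

/-- A graph is `P4`-free if it has no induced path on four vertices. -/
def P4Free {X : Type*} (G : SimpleGraph X) : Prop :=
  ∀ a b c d : X, ¬ IsInducedP4 G a b c d

/-- `inc(x)`: the set of non-neighbours of `x` other than `x` itself. -/
def incSet {X : Type*} (G : SimpleGraph X) (x : X) : Set X :=
  {y | y ≠ x ∧ ¬ G.Adj x y}

/-- `N_x`: the neighbours of `x` which are adjacent to every element of `inc(x)`. -/
def NSet {X : Type*} (G : SimpleGraph X) (x : X) : Set X :=
  {y | G.Adj x y ∧ ∀ z ∈ incSet G x, G.Adj y z}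

/-- `A` is a module of `G`: every vertex outside `A` is adjacent to all of `A` or to none of `A`. -/
def IsModule {X : Type*} (G : SimpleGraph X) (A : Set X) : Prop :=
  ∀ v ∉ A, (∀ a ∈ A, G.Adj v a) ∨ (∀ a ∈ A, ¬ G.Adj v a)

/-- A cograph: every induced subgraph with at least two vertices is disconnected or has a
disconnected complement. -/
def Cograph {X : Type*} (G : SimpleGraph X) : Prop :=
  ∀ s : Set X, s.Nontrivial → ¬ (G.induce s).Connected ∨ ¬ ((G.induce s)ᶜ).Connected

/-- `u` and `v` are incomparable with respect to the relation `le`. -/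
def IncompRelLE {X : Type*} (le : X → X → Prop) (u v : X) : Prop :=
  ¬ le u v ∧ ¬ le v u

/-- The order with `≤` relation `le` is `N`-free: there are no four distinct elements
`a, b, c, d` with `a < b`, `c < b`, `c < d` and no other comparabilities among them. -/
def NFreeRel {X : Type*} (le : X → X → Prop) : Prop :=
  ∀ a b c d : X, ¬ (a ≠ b ∧ a ≠ c ∧ a ≠ d ∧ b ≠ c ∧ b ≠ d ∧ c ≠ d ∧
    le a b ∧ le c b ∧ le c d ∧ IncompRelLE le a c ∧ IncompRelLE le a d ∧ IncompRelLE le b d)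

/-- The comparability graph of a partial order. -/
def compGraphOfLE {X : Type*} (po : PartialOrder X) : SimpleGraph X where
  Adj u v := u ≠ v ∧ (po.le u v ∨ po.le v u)
  symm := by constructor; intro u v h; exact ⟨h.1.symm, h.2.symm⟩
  loopless := by constructor; intro u h; exact h.1 rfl

/-!
Orienting an induced `P4` of a comparability graph along the order always produces an `N`, and
conversely, so it suffices to show that a `P4`-free graph is a comparability graph.

For an edge `uv` let `K_v(u)` be the component of `u` in the complement of the subgraph induced
on the neighbourhood of `v`. In a `P4`-free graph every vertex of `K_v(u)` is adjacent to every
vertex of `K_u(v)`, so these sets are disjoint. Fix a well-order of the vertices and orient `uv`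
from `u` to `v` when the least element of `K_v(u)` precedes that of `K_u(v)`. For a triangle,
`P4`-freeness forces enough of the sets `K` to coincide for this orientation to be transitive.
-/

open Relation

section OrderToGraph

variable {X : Type*} {G : SimpleGraph X} {a b c d : X}

theorem isInducedP4_of_adj (hab : G.Adj a b) (hbc : G.Adj b c) (hcd : G.Adj c d)
    (hac : ¬ G.Adj a c) (had : ¬ G.Adj a d) (hbd : ¬ G.Adj b d) : IsInducedP4 G a b c d := by
  refine ⟨hab.ne, ?_, ?_, hbc.ne, ?_, hcd.ne, hab, hbc, hcd, hac, had, hbd⟩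
  · rintro rfl; exact had hcd
  · rintro rfl; exact hac hcd.symm
  · rintro rfl; exact had hab

theorem P4Free.adj_of_adj_of_adj_of_adj (hP : P4Free G) (hab : G.Adj a b) (hbc : G.Adj b c)
    (hcd : G.Adj c d) (hac : ¬ G.Adj a c) (hbd : ¬ G.Adj b d) : G.Adj a d :=
  by_contra fun had => hP a b c d (isInducedP4_of_adj hab hbc hcd hac had hbd)

variable {po : PartialOrder X} {u v : X}

theorem not_compGraphOfLE_adj_iff (h : u ≠ v) :
    ¬ (compGraphOfLE po).Adj u v ↔ IncompRelLE po.le u v := by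
  simp only [compGraphOfLE, IncompRelLE, h, ne_eq, not_false_eq_true, true_and, not_or]

theorem nFreeRel_iff_p4Free_compGraphOfLE : NFreeRel po.le ↔ P4Free (compGraphOfLE po) := by
  constructor
  · rintro hN a b c d ⟨hab, hac, had, hbc, hbd, hcd, eab, ebc, ecd, nac, nad, nbd⟩
    rw [not_compGraphOfLE_adj_iff hac] at nac
    rw [not_compGraphOfLE_adj_iff had] at nad
    rw [not_compGraphOfLE_adj_iff hbd] at nbd
    -- the orientation of `ab` forces that of `bc`, which forces that of `cd`
    rcases eab.2 with lab | lba
    · have lcb : po.le c b := ebc.2.resolve_left fun lbc => nac.1 (po.le_trans _ _ _ lab lbc)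
      have lcd : po.le c d := ecd.2.resolve_right fun ldc => nbd.2 (po.le_trans _ _ _ ldc lcb)
      exact hN a b c d ⟨hab, hac, had, hbc, hbd, hcd, lab, lcb, lcd, nac, nad, nbd⟩
    · have lbc : po.le b c := ebc.2.resolve_right fun lcb => nac.2 (po.le_trans _ _ _ lcb lba)
      have ldc : po.le d c := ecd.2.resolve_left fun lcd => nbd.1 (po.le_trans _ _ _ lbc lcd)
      exact hN d c b a ⟨hcd.symm, hbd.symm, had.symm, hbc.symm, hac.symm, hab.symm, ldc, lbc,
        lba, nbd.symm, nad.symm, nac.symm⟩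
  · rintro hP a b c d ⟨hab, hac, had, hbc, hbd, hcd, lab, lcb, lcd, nac, nad, nbd⟩
    refine hP a b c d
      (isInducedP4_of_adj ⟨hab, .inl lab⟩ ⟨hbc, .inr lcb⟩ ⟨hcd, .inl lcd⟩ ?_ ?_ ?_)
    · exact (not_compGraphOfLE_adj_iff hac).2 nac
    · exact (not_compGraphOfLE_adj_iff had).2 nad
    · exact (not_compGraphOfLE_adj_iff hbd).2 nbd

end OrderToGraph

section GraphToOrder

variable {X : Type*}

def NonAdjNeighbors (G : SimpleGraph X) (v a b : X) : Prop :=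
  G.Adj v a ∧ G.Adj v b ∧ ¬ G.Adj a b

/-- `K_v(u)` in the notation above; it is `{u}` when `u` is not a neighbour of `v`. -/
def coComponent (G : SimpleGraph X) (v u : X) : Set X :=
  {x | ReflTransGen (NonAdjNeighbors G v) u x}

variable {G : SimpleGraph X} {u v w x y : X}

theorem mem_coComponent_self : u ∈ coComponent G v u := ReflTransGen.refl

theorem mem_coComponent_comm (h : x ∈ coComponent G v u) : u ∈ coComponent G v x := by
  induction h with
  | refl => exact ReflTransGen.refl
  | tail _ hstep ih =>
    exact ReflTransGen.head ⟨hstep.2.1, hstep.1, fun h => hstep.2.2 h.symm⟩ ih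

theorem coComponent_eq_of_mem (h : x ∈ coComponent G v u) :
    coComponent G v u = coComponent G v x :=
  Set.ext fun _ => ⟨(mem_coComponent_comm h).trans, h.trans⟩

theorem adj_of_mem_coComponent (hvu : G.Adj v u) (hx : x ∈ coComponent G v u) : G.Adj v x := by
  induction hx with
  | refl => exact hvu
  | tail _ hstep _ => exact hstep.2.1

theorem adj_of_notMem_coComponent (hwv : G.Adj w v) (hwu : G.Adj w u)
    (hv : v ∉ coComponent G w u) (hy : y ∈ coComponent G w u) : G.Adj v y :=
  by_contra fun hvy =>
    hv (hy.tail ⟨adj_of_mem_coComponent hwu hy, hwv, fun h => hvy h.symm⟩)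

theorem coComponent_subset_of_forall_adj (h : ∀ y ∈ coComponent G u w, G.Adj v y) :
    coComponent G u w ⊆ coComponent G v w := by
  intro x hx
  induction hx with
  | refl => exact mem_coComponent_self
  | @tail b x hwb hbx ih => exact ih.tail ⟨h b hwb, h x (hwb.tail hbx), hbx.2.2⟩

theorem coComponent_eq_of_notMem (hvu : G.Adj v u) (hwu : G.Adj w u) (hvw : G.Adj v w)
    (hv : v ∉ coComponent G w u) (hw : w ∉ coComponent G v u) :
    coComponent G v u = coComponent G w u :=
  (coComponent_subset_of_forall_adj fun _ => adj_of_notMem_coComponent hvw hvu hw).antisymm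
    (coComponent_subset_of_forall_adj fun _ => adj_of_notMem_coComponent hvw.symm hwu hv)

theorem P4Free.adj_of_mem_coComponent (hP : P4Free G) (huv : G.Adj u v)
    (hx : x ∈ coComponent G v u) (hy : y ∈ coComponent G u v) : G.Adj x y := by
  induction hx generalizing y with
  | refl => exact adj_of_mem_coComponent huv hy
  | @tail b x _ hbx ihb =>
    induction hy with
    | refl => exact hbx.2.1.symm
    | @tail c y hvc hcy ihc =>
      exact hP.adj_of_adj_of_adj_of_adj ihc (ihb hvc).symm (ihb (hvc.tail hcy))
        (fun h => hbx.2.2 h.symm) hcy.2.2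

theorem P4Free.coComponent_eq_of_mem_coComponent (hP : P4Free G) (huw : G.Adj u w)
    (hwv : G.Adj w v) (hv : v ∈ coComponent G w u) : coComponent G u w = coComponent G v w :=
  (coComponent_subset_of_forall_adj fun _ => hP.adj_of_mem_coComponent huw hv).antisymm
    (coComponent_subset_of_forall_adj fun _ =>
      hP.adj_of_mem_coComponent hwv.symm (mem_coComponent_comm hv))

variable (G) in
noncomputable def coMin (v u : X) : X :=
  IsWellFounded.wf.min (r := WellOrderingRel) (coComponent G v u) ⟨u, mem_coComponent_self⟩

theorem coMin_mem : coMin G v u ∈ coComponent G v u := WellFounded.min_mem _ _ _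

theorem coMin_congr {v' u' : X} (h : coComponent G v u = coComponent G v' u') :
    coMin G v u = coMin G v' u' := by
  unfold coMin
  congr 1

theorem P4Free.coMin_ne (hP : P4Free G) (huv : G.Adj u v) : coMin G v u ≠ coMin G u v :=
  fun h => G.loopless.irrefl _ (hP.adj_of_mem_coComponent huv coMin_mem (h ▸ coMin_mem))

variable (G) in
def CoLT (u v : X) : Prop :=
  G.Adj u v ∧ WellOrderingRel (coMin G v u) (coMin G u v)

theorem P4Free.coLT_or_coLT (hP : P4Free G) (h : G.Adj u v) : CoLT G u v ∨ CoLT G v u :=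
  (trichotomous_of WellOrderingRel _ _).elim (fun h' => .inl ⟨h, h'⟩) fun h' =>
    h'.elim (fun h' => absurd h' (hP.coMin_ne h)) fun h' => .inr ⟨h.symm, h'⟩

theorem P4Free.coLT_trans (hP : P4Free G) (huv : CoLT G u v) (hvw : CoLT G v w) :
    CoLT G u w := by
  obtain ⟨hadj_uv, h1⟩ := huv
  obtain ⟨hadj_vw, h2⟩ := hvw
  -- otherwise `uv` and `vw` would carry the same two labels, in opposite order
  have hw : w ∉ coComponent G v u := fun hw => by
    rw [coMin_congr (coComponent_eq_of_mem hw),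
      coMin_congr (hP.coComponent_eq_of_mem_coComponent hadj_uv hadj_vw hw)] at h1
    exact asymm h1 h2
  have hadj_uw : G.Adj u w :=
    by_contra fun h => hw (ReflTransGen.single ⟨hadj_uv.symm, hadj_vw, h⟩)
  refine ⟨hadj_uw, ?_⟩
  by_cases hv : v ∈ coComponent G w u
  · rwa [coMin_congr (coComponent_eq_of_mem hv),
      coMin_congr (hP.coComponent_eq_of_mem_coComponent hadj_uw hadj_vw.symm hv)]
  by_cases hw' : w ∈ coComponent G u v
  · rwa [← coMin_congr (coComponent_eq_of_mem hw'),
      ← coMin_congr (hP.coComponent_eq_of_mem_coComponent hadj_uv.symm hadj_uw hw')]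
  -- now every vertex of the triangle has the same co-component around both others
  have hvw_u := coComponent_eq_of_notMem hadj_uv.symm hadj_uw.symm hadj_vw hv hw
  have huw_v := coComponent_eq_of_notMem hadj_uv hadj_vw.symm hadj_uw
    (fun h => hv (mem_coComponent_comm h)) hw'
  have hvu_w := coComponent_eq_of_notMem hadj_vw hadj_uw hadj_uv.symm
    (fun h => hw' (mem_coComponent_comm h)) (fun h => hw (mem_coComponent_comm h))
  rw [← coMin_congr hvw_u, ← coMin_congr hvu_w]
  rw [coMin_congr huw_v] at h1
  exact _root_.trans h1 h2

theorem P4Free.isStrictOrder_coLT (hP : P4Free G) : IsStrictOrder X (CoLT G) where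
  irrefl _ h := G.loopless.irrefl _ h.1
  trans _ _ _ := hP.coLT_trans

theorem P4Free.compGraphOfLE_coLT (hP : P4Free G) :
    letI := hP.isStrictOrder_coLT
    compGraphOfLE (partialOrderOfSO (CoLT G)) = G := by
  ext u v
  refine ⟨?_, fun h => ⟨h.ne, ?_⟩⟩
  · rintro ⟨hne, (rfl | h) | (rfl | h)⟩
    exacts [absurd rfl hne, h.1, absurd rfl hne, h.1.symm]
  · exact (hP.coLT_or_coLT h).imp .inr .inr

end GraphToOrder

theorem p4Free_iff_comparability_of_nfree_order
    {X : Type*} (G : SimpleGraph X) :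
    P4Free G ↔ ∃ po : PartialOrder X, NFreeRel po.le ∧ compGraphOfLE po = G := by
  refine ⟨fun hP => ?_, ?_⟩
  · have := hP.isStrictOrder_coLT
    refine ⟨partialOrderOfSO (CoLT G), ?_, hP.compGraphOfLE_coLT⟩
    rw [nFreeRel_iff_p4Free_compGraphOfLE, hP.compGraphOfLE_coLT]
    exact hP
  · rintro ⟨po, hN, rfl⟩
    exact nFreeRel_iff_p4Free_compGraphOfLE.1 hN
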